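/- arXiv:2105.01571 — 3 statements merged into one kernel-verified Lean document; each statement's English description precedes it below -/
import Mathlib

section
/- For z ∈ ℝⁿ, if v* ≥ 0 satisfies ∑ᵢ min(1, max(0, zᵢ − v*)) = K, then the vector s with sᵢ = min(1, max(0, zᵢ − v*)) is the Euclidean projection of z onto C = {s ∈ [0,1]ⁿ : ∑ᵢ sᵢ ≤ K}, i.e., s ∈ C and ‖z − s‖₂ ≤ ‖z − s'‖₂ for all s' ∈ C. -/
open Finset

/-- `min 1 (max 0 y)` is the nearest point of `[0, 1]` to `y`, so `y` minus it has nonpositive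
inner product with every direction pointing into `[0, 1]`. -/
lemma sub_clamp_mul_sub_clamp_nonpos {y t : ℝ} (ht₀ : 0 ≤ t) (ht₁ : t ≤ 1) :
    (y - min 1 (max 0 y)) * (t - min 1 (max 0 y)) ≤ 0 := by
  rcases le_total y 0 with hy₀ | hy₀
  · rw [max_eq_left hy₀, min_eq_right zero_le_one]
    nlinarith
  rcases le_total y 1 with hy₁ | hy₁
  · rw [max_eq_right hy₀, min_eq_right hy₁, sub_self, zero_mul]
  · rw [max_eq_right hy₀, min_eq_left hy₁]
    nlinarith

lemma norm_sub_le_norm_sub_of_inner_nonpos {E : Type*} [NormedAddCommGroup E]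
    [InnerProductSpace ℝ E] {u p w : E} (h : inner ℝ (u - p) (w - p) ≤ 0) :
    ‖u - p‖ ≤ ‖u - w‖ := by
  have hexpand : ‖u - w‖ ^ 2 = ‖u - p‖ ^ 2 - 2 * inner ℝ (u - p) (w - p) + ‖w - p‖ ^ 2 := by
    rw [← norm_sub_sq_real, sub_sub_sub_cancel_right]
  refine (pow_le_pow_iff_left₀ (norm_nonneg _) (norm_nonneg _) two_ne_zero).mp ?_
  nlinarith [sq_nonneg ‖w - p‖]

theorem projection_formula_boundary_case_general
    (n : ℕ) (K : ℝ) (z : EuclideanSpace ℝ (Fin n))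
    (v : ℝ) (hv : 0 ≤ v)
    (hsum : (∑ i, min 1 (max 0 (z i - v))) = K)
    (s : EuclideanSpace ℝ (Fin n))
    (hs : ∀ i, s i = min 1 (max 0 (z i - v))) :
    (s ∈ {x : EuclideanSpace ℝ (Fin n) | (∀ i, 0 ≤ x i ∧ x i ≤ 1) ∧ (∑ i, x i) ≤ K}) ∧
    ∀ s' ∈ {x : EuclideanSpace ℝ (Fin n) | (∀ i, 0 ≤ x i ∧ x i ≤ 1) ∧ (∑ i, x i) ≤ K},
      ‖z - s‖ ≤ ‖z - s'‖ := by
  have hsum_s : ∑ i, s i = K := by simp only [hs, hsum]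
  have hbox : ∀ i, 0 ≤ s i ∧ s i ≤ 1 := fun i =>
    hs i ▸ ⟨le_min zero_le_one (le_max_left _ _), min_le_left _ _⟩
  refine ⟨⟨hbox, hsum_s.le⟩, fun s' ⟨hbox', hsum'⟩ => norm_sub_le_norm_sub_of_inner_nonpos ?_⟩
  -- `v` is the multiplier of the active constraint `∑ i, x i ≤ K`.
  have hcoord : ∀ i, (z i - s i) * (s' i - s i) ≤ v * (s' i - s i) := fun i => by
    have h := sub_clamp_mul_sub_clamp_nonpos (y := z i - v) (hbox' i).1 (hbox' i).2
    rw [← hs i] at h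
    linear_combination h
  calc inner ℝ (z - s) (s' - s) = ∑ i, (z i - s i) * (s' i - s i) := by
        simp [PiLp.inner_apply, mul_comm]
    _ ≤ ∑ i, v * (s' i - s i) := sum_le_sum fun i _ => hcoord i
    _ = v * (∑ i, s' i - K) := by rw [← mul_sum, sum_sub_distrib, hsum_s]
    _ ≤ 0 := mul_nonpos_of_nonneg_of_nonpos hv (by linarith)

theorem projection_formula_boundary_case
    (n : ℕ) (K : ℝ) (hK : 0 < K) (z : EuclideanSpace ℝ (Fin n))
    (v : ℝ) (hv : 0 ≤ v)
    (hsum : (∑ i, min 1 (max 0 (z i - v))) = K)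
    (s : EuclideanSpace ℝ (Fin n))
    (hs : ∀ i, s i = min 1 (max 0 (z i - v))) :
    (s ∈ {x : EuclideanSpace ℝ (Fin n) | (∀ i, 0 ≤ x i ∧ x i ≤ 1) ∧ (∑ i, x i) ≤ K}) ∧
    ∀ s' ∈ {x : EuclideanSpace ℝ (Fin n) | (∀ i, 0 ≤ x i ∧ x i ≤ 1) ∧ (∑ i, x i) ≤ K},
      ‖z - s‖ ≤ ‖z - s'‖ :=
  projection_formula_boundary_case_general n K z v hv hsum s hs
end

section
/- For s ∈ (0,1) and independent standard Gumbel g₀, g₁, the random variable m = 1(log(s/(1−s)) + g₁ − g₀ ≥ 0) has the same distribution as a Bernoulli(s) random variable, i.e., it takes value 1 with probability s and 0 with probability 1 − s. -/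
open MeasureTheory ProbabilityTheory Real

/-!
Conditioning on `g₁ = y`, the event `g₀ ≤ c + g₁` has probability
`F(c + y) = exp (-e^{-c} e^{-y})`, where `F` is the standard Gumbel CDF. Against the density
`e^{-y} exp (-e^{-y})` of `g₁` this gives `e^{-y} exp (-(1 + e^{-c}) e^{-y})`, which is
`1 / (1 + e^{-c})` times a (shifted) Gumbel density. So `P(g₀ ≤ c + g₁)` is the logistic
function `1 / (1 + e^{-c})`, and at `c = log (s / (1 - s))` this is `s`.
-/

open Set Filter Topology

theorem integrableOn_Iic_deriv_of_nonneg {f f' : ℝ → ℝ} {m : ℝ} (x : ℝ)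
    (hderiv : ∀ y, HasDerivAt f (f' y) y) (hf' : Continuous f') (hnonneg : ∀ y, 0 ≤ f' y)
    (hbot : Tendsto f atBot (𝓝 m)) : IntegrableOn f' (Iic x) := by
  have hint : ∀ i, ∫ y in i..x, ‖f' y‖ = f x - f i := fun i => by
    simp_rw [Real.norm_of_nonneg (hnonneg _)]
    exact intervalIntegral.integral_eq_sub_of_hasDerivAt (fun y _ => hderiv y)
      (hf'.intervalIntegrable _ _)
  refine integrableOn_Iic_of_intervalIntegral_norm_tendsto (a := id) (f x - m) x
    (fun _ => hf'.integrableOn_Ioc) tendsto_id ?_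
  simpa only [id, hint] using tendsto_const_nhds.sub hbot

/-- The Gumbel law with location `log a`, parametrised by `a` so that shifts act by scaling `a`
(`gumbelCDF_add`) and no logarithms appear. -/
noncomputable def gumbelCDF (a x : ℝ) : ℝ := exp (-(a * exp (-x)))

noncomputable def gumbelPDF (a x : ℝ) : ℝ := a * exp (-x) * exp (-(a * exp (-x)))

noncomputable def gumbelMeasure (a : ℝ) : Measure ℝ :=
  volume.withDensity fun x => ENNReal.ofReal (gumbelPDF a x)

section Gumbel

variable {a : ℝ}

theorem hasDerivAt_gumbelCDF (a x : ℝ) : HasDerivAt (gumbelCDF a) (gumbelPDF a x) x := by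
  have h : HasDerivAt (fun y => exp (-(a * exp (-y))))
      (exp (-(a * exp (-x))) * -(a * (exp (-x) * -1))) x :=
    (((hasDerivAt_neg x).exp.const_mul a).neg).exp
  exact h.congr_deriv (by unfold gumbelPDF; ring)

theorem continuous_gumbelPDF (a : ℝ) : Continuous (gumbelPDF a) := by
  unfold gumbelPDF; fun_prop

theorem continuous_gumbelCDF (a : ℝ) : Continuous (gumbelCDF a) := by
  unfold gumbelCDF; fun_prop

theorem gumbelPDF_nonneg (ha : 0 ≤ a) (x : ℝ) : 0 ≤ gumbelPDF a x := by
  unfold gumbelPDF; positivity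

theorem tendsto_gumbelCDF_atBot (ha : 0 < a) : Tendsto (gumbelCDF a) atBot (𝓝 0) :=
  tendsto_exp_atBot.comp <| tendsto_neg_atBot_iff.2 <|
    (tendsto_exp_atTop.comp tendsto_neg_atBot_atTop).const_mul_atTop ha

theorem tendsto_gumbelCDF_atTop (a : ℝ) : Tendsto (gumbelCDF a) atTop (𝓝 1) := by
  have h : Tendsto (fun x => -(a * exp (-x))) atTop (𝓝 (-(a * 0))) :=
    ((tendsto_exp_atBot.comp tendsto_neg_atTop_atBot).const_mul a).neg
  show Tendsto (fun x => exp (-(a * exp (-x)))) atTop (𝓝 1)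
  simpa [Function.comp_def] using (continuous_exp.tendsto _).comp h

theorem gumbelMeasure_Iic (ha : 0 < a) (x : ℝ) :
    gumbelMeasure a (Iic x) = ENNReal.ofReal (gumbelCDF a x) := by
  have hint := integrableOn_Iic_deriv_of_nonneg x (hasDerivAt_gumbelCDF a)
    (continuous_gumbelPDF a) (gumbelPDF_nonneg ha.le) (tendsto_gumbelCDF_atBot ha)
  rw [gumbelMeasure, withDensity_apply _ measurableSet_Iic,
    ← ofReal_integral_eq_lintegral_ofReal hint (.of_forall (gumbelPDF_nonneg ha.le)),
    integral_Iic_of_hasDerivAt_of_tendsto' (fun y _ => hasDerivAt_gumbelCDF a y) hint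
      (tendsto_gumbelCDF_atBot ha), sub_zero]

theorem isProbabilityMeasure_gumbelMeasure (ha : 0 < a) :
    IsProbabilityMeasure (gumbelMeasure a) := by
  refine ⟨tendsto_nhds_unique (tendsto_measure_Iic_atTop _) ?_⟩
  simp_rw [gumbelMeasure_Iic ha]
  simpa [Function.comp_def] using
    (ENNReal.continuous_ofReal.tendsto 1).comp (tendsto_gumbelCDF_atTop a)

theorem gumbelCDF_add (a c x : ℝ) : gumbelCDF a (c + x) = gumbelCDF (a * exp (-c)) x := by
  simp only [gumbelCDF, neg_add, exp_add]
  ring_nf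

theorem gumbelPDF_mul_gumbelCDF {b : ℝ} (hab : a + b ≠ 0) (x : ℝ) :
    gumbelPDF a x * gumbelCDF b x = a / (a + b) * gumbelPDF (a + b) x := by
  simp only [gumbelPDF, gumbelCDF]
  rw [mul_assoc, ← exp_add]
  field_simp
  ring_nf

theorem lintegral_gumbelCDF_gumbelMeasure {b : ℝ} (ha : 0 ≤ a) (hab : 0 < a + b) :
    ∫⁻ x, ENNReal.ofReal (gumbelCDF b x) ∂gumbelMeasure a = ENNReal.ofReal (a / (a + b)) := by
  have hmass : ∫⁻ x, ENNReal.ofReal (gumbelPDF (a + b) x) = 1 := by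
    have h := (isProbabilityMeasure_gumbelMeasure hab).measure_univ
    rwa [gumbelMeasure, withDensity_apply _ .univ, Measure.restrict_univ] at h
  have hdens : ∀ x, ENNReal.ofReal (gumbelPDF a x) * ENNReal.ofReal (gumbelCDF b x)
      = ENNReal.ofReal (a / (a + b)) * ENNReal.ofReal (gumbelPDF (a + b) x) := fun x => by
    rw [← ENNReal.ofReal_mul (gumbelPDF_nonneg ha x), gumbelPDF_mul_gumbelCDF hab.ne',
      ENNReal.ofReal_mul (by positivity)]
  rw [gumbelMeasure, lintegral_withDensity_eq_lintegral_mul _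
    (continuous_gumbelPDF a).measurable.ennreal_ofReal
    (continuous_gumbelCDF b).measurable.ennreal_ofReal]
  simp only [Pi.mul_apply, hdens]
  rw [lintegral_const_mul _ (continuous_gumbelPDF _).measurable.ennreal_ofReal, hmass, mul_one]

end Gumbel

section Independence

variable {Ω : Type*} [MeasurableSpace Ω] {μ : Measure Ω} [IsFiniteMeasure μ]

theorem map_eq_gumbelMeasure {g : Ω → ℝ} {a : ℝ} (hg : Measurable g) (ha : 0 < a)
    (hcdf : ∀ x, μ {ω | g ω ≤ x} = ENNReal.ofReal (gumbelCDF a x)) :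
    μ.map g = gumbelMeasure a :=
  Measure.ext_of_Iic _ _ fun x => by
    rw [Measure.map_apply hg measurableSet_Iic, gumbelMeasure_Iic ha]
    exact hcdf x

theorem measure_le_comp_eq_lintegral_map {X Y : Ω → ℝ} (hX : Measurable X) (hY : Measurable Y)
    (hXY : IndepFun X Y μ) {f : ℝ → ℝ} (hf : Measurable f) :
    μ {ω | X ω ≤ f (Y ω)} = ∫⁻ y, μ.map X (Iic (f y)) ∂μ.map Y := by
  have hT : MeasurableSet {p : ℝ × ℝ | p.2 ≤ f p.1} :=
    measurableSet_le measurable_snd (hf.comp measurable_fst)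
  have hmap : μ.map (fun ω => (Y ω, X ω)) = (μ.map Y).prod (μ.map X) :=
    (indepFun_iff_map_prod_eq_prod_map_map hY.aemeasurable hX.aemeasurable).1 hXY.symm
  rw [show {ω | X ω ≤ f (Y ω)} = (fun ω => (Y ω, X ω)) ⁻¹' {p | p.2 ≤ f p.1} from rfl,
    ← Measure.map_apply (hY.prodMk hX) hT, hmap, Measure.prod_apply hT]
  rfl

theorem measure_gumbel_le_add_gumbel {g₀ g₁ : Ω → ℝ} {a b : ℝ} (hm₀ : Measurable g₀)
    (hm₁ : Measurable g₁) (hindep : IndepFun g₀ g₁ μ) (ha : 0 < a) (hb : 0 < b)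
    (h₀ : μ.map g₀ = gumbelMeasure b) (h₁ : μ.map g₁ = gumbelMeasure a) (c : ℝ) :
    μ {ω | g₀ ω ≤ c + g₁ ω} = ENNReal.ofReal (a / (a + b * exp (-c))) := by
  rw [measure_le_comp_eq_lintegral_map hm₀ hm₁ hindep (measurable_const_add c), h₀, h₁]
  simp only [gumbelMeasure_Iic hb, gumbelCDF_add]
  exact lintegral_gumbelCDF_gumbelMeasure ha.le (by positivity)

end Independence

theorem gumbel_indicator_is_bernoulli
    {Ω : Type*} [MeasurableSpace Ω] (μ : Measure Ω) [IsProbabilityMeasure μ]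
    (s : ℝ) (hs : 0 < s) (hs1 : s < 1)
    (g₀ g₁ : Ω → ℝ) (hm₀ : Measurable g₀) (hm₁ : Measurable g₁)
    (hindep : IndepFun g₀ g₁ μ)
    (hg₀ : ∀ x : ℝ, μ {ω | g₀ ω ≤ x} = ENNReal.ofReal (exp (-exp (-x))))
    (hg₁ : ∀ x : ℝ, μ {ω | g₁ ω ≤ x} = ENNReal.ofReal (exp (-exp (-x))))
    (m : Ω → ℝ)
    (hm : ∀ ω, m ω = if 0 ≤ Real.log (s / (1 - s)) + g₁ ω - g₀ ω then 1 else 0) :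
    μ {ω | m ω = 1} = ENNReal.ofReal s ∧ μ {ω | m ω = 0} = ENNReal.ofReal (1 - s) := by
  set c := Real.log (s / (1 - s))
  have hstd : ∀ x, exp (-exp (-x)) = gumbelCDF 1 x := fun x => by rw [gumbelCDF, one_mul]
  have hlogistic : 1 / (1 + 1 * exp (-c)) = s := by
    have hs1' : 0 < 1 - s := by linarith
    rw [exp_neg, exp_log (by positivity)]
    field_simp
    ring
  have hP : μ {ω | g₀ ω ≤ c + g₁ ω} = ENNReal.ofReal s := by
    rw [measure_gumbel_le_add_gumbel hm₀ hm₁ hindep one_pos one_pos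
      (map_eq_gumbelMeasure hm₀ one_pos (by simpa only [hstd] using hg₀))
      (map_eq_gumbelMeasure hm₁ one_pos (by simpa only [hstd] using hg₁)), hlogistic]
  have hone : {ω | m ω = 1} = {ω | g₀ ω ≤ c + g₁ ω} := by
    ext ω
    simp only [mem_ofPred_eq, hm, sub_nonneg]
    split_ifs <;> simp_all
  have hzero : {ω | m ω = 0} = {ω | g₀ ω ≤ c + g₁ ω}ᶜ := by
    ext ω
    simp only [mem_ofPred_eq, mem_compl_iff, hm, sub_nonneg]
    split_ifs <;> simp_all
  refine ⟨hone ▸ hP, ?_⟩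
  rw [hzero, prob_compl_eq_one_sub (measurableSet_le hm₀ (hm₁.const_add c)), hP,
    ← ENNReal.ofReal_one, ← ENNReal.ofReal_sub _ hs.le]
end

section
/- Let z ∈ ℝⁿ, v* ≥ 0, and s with sᵢ = min(1, max(0, zᵢ − v*)). Then for every s' ∈ [0,1]ⁿ with ∑ᵢ s'ᵢ ≤ K, assuming either v* = 0 or ∑ᵢ sᵢ = K, one has ∑ᵢ (zᵢ − sᵢ)(s'ᵢ − sᵢ) ≤ 0. -/
/-! Each `s i` is the projection of `z i - v` onto `[0, 1]`, so `(z i - v - s i) * (s' i - s i) ≤ 0`.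
Summing, the left-hand side is at most `v * (∑ s' - ∑ s)`, which is `≤ 0` by complementary
slackness. -/

open Finset

theorem sub_clamp_mul_sub_clamp_nonpos_s18 {α : Type*} [Ring α] [LinearOrder α] [IsOrderedRing α]
    {a b x t : α} (hab : a ≤ b) (ht : t ∈ Set.Icc a b) :
    (x - min b (max a x)) * (t - min b (max a x)) ≤ 0 := by
  rcases le_total x a with hxa | hax
  · rw [max_eq_left hxa, min_eq_right hab]
    exact mul_nonpos_of_nonpos_of_nonneg (sub_nonpos.2 hxa) (sub_nonneg.2 ht.1)
  rcases le_total b x with hbx | hxb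
  · rw [max_eq_right hax, min_eq_left hbx]
    exact mul_nonpos_of_nonneg_of_nonpos (sub_nonneg.2 hbx) (sub_nonpos.2 ht.2)
  · rw [max_eq_right hax, min_eq_right hxb, sub_self, zero_mul]

theorem variational_inequality_verification
    (n : ℕ) (K : ℝ) (z : Fin n → ℝ) (v : ℝ) (hv : 0 ≤ v)
    (s : Fin n → ℝ) (hs : ∀ i, s i = min 1 (max 0 (z i - v)))
    (hslack : v = 0 ∨ (∑ i, s i) = K) :
    ∀ s' : Fin n → ℝ, (∀ i, 0 ≤ s' i ∧ s' i ≤ 1) → (∑ i, s' i) ≤ K →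
      (∑ i, (z i - s i) * (s' i - s i)) ≤ 0 := by
  intro s' hs' hK
  have hcoord : ∀ i, (z i - s i) * (s' i - s i) ≤ v * (s' i - s i) := by
    intro i
    have hproj := sub_clamp_mul_sub_clamp_nonpos_s18 (x := z i - v) zero_le_one (hs' i)
    rw [← hs i] at hproj
    linarith
  calc ∑ i, (z i - s i) * (s' i - s i)
      ≤ ∑ i, v * (s' i - s i) := sum_le_sum fun i _ => hcoord i
    _ = v * (∑ i, s' i - ∑ i, s i) := by rw [← mul_sum, sum_sub_distrib]
    _ ≤ 0 := by
      rcases hslack with rfl | hsum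
      · rw [zero_mul]
      · exact mul_nonpos_of_nonneg_of_nonpos hv (by linarith)
end
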